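/- Let A be a partial order, a ∈ A, and define ≤_a on lists over A_a = A \ {a} as: v ≤_a w iff there exist a-extensions v', w' of equal length with v' ≤ w' componentwise. Then ≤_a is transitive. -/

import Mathlib

/-- Erase all occurrences of the letter `a` from a word. -/
def aErase {α : Type*} [DecidableEq α] (a : α) (w : List α) : List α :=
  w.filter (· ≠ a)

/-- `w'` is an `a`-extension of `w`: it is obtained by inserting copies of `a` into `w`,
equivalently erasing all occurrences of `a` from `w'` yields `w`. -/
def IsAExt {α : Type*} [DecidableEq α] (a : α) (w w' : List α) : Prop :=
  aErase a w' = w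

/-- The induced relation `≤ₐ` on words, relative to a relation `r` on letters:
`v ≤ₐ w` iff there are `a`-extensions of `v` and `w` of equal length that are
related componentwise (componentwise relation of equal-length lists is `List.Forall₂ r`). -/
def LeExt {α : Type*} [DecidableEq α] (r : α → α → Prop) (a : α) (v w : List α) : Prop :=
  ∃ v' w', IsAExt a v v' ∧ IsAExt a w w' ∧ List.Forall₂ r v' w'

/-!
Given `u' ≤ v₁` and `v₂ ≤ w'` componentwise with `v₁`, `v₂` two `a`-extensions of the same
word, walk along `v₁` and `v₂` simultaneously. Where both carry a letter of the common
erasure, the letters agree and the two comparisons compose. Where only one of them carries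
an inserted `a`, pad the other side with an `a` as well, comparing through `a ≤ a`.
This yields a common refinement: extensions of `u` and `w` that are related componentwise.
-/

section

variable {α : Type*} [DecidableEq α]

lemma aErase_cons_self (a : α) (l : List α) : aErase a (a :: l) = aErase a l := by
  simp [aErase]

lemma aErase_cons_of_ne {a x : α} (h : x ≠ a) (l : List α) :
    aErase a (x :: l) = x :: aErase a l := by
  simp [aErase, h]

lemma aErase_cons_congr {a : α} (x : α) {l l' : List α} (h : aErase a l = aErase a l') :
    aErase a (x :: l) = aErase a (x :: l') := by
  unfold aErase at *
  rw [List.filter_cons, List.filter_cons, h]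

theorem exists_forall₂_comp_of_aErase_eq {r s : α → α → Prop} {a : α} (hr : r a a)
    (hs : s a a) {u' v₁ v₂ w' : List α} (h₁ : List.Forall₂ r u' v₁)
    (h₂ : List.Forall₂ s v₂ w') (he : aErase a v₁ = aErase a v₂) :
    ∃ U W, aErase a U = aErase a u' ∧ aErase a W = aErase a w' ∧
      List.Forall₂ (Relation.Comp r s) U W := by
  induction h₁ generalizing v₂ w' with
  | nil =>
    induction h₂ with
    | nil => exact ⟨[], [], rfl, rfl, .nil⟩
    | @cons y q ys qs hyq h₂ ih =>
      have hy : y = a := by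
        by_contra hy
        simp [aErase, hy] at he
      rw [hy, aErase_cons_self] at he
      rw [hy] at hyq
      obtain ⟨U, W, hU, hW, hUW⟩ := ih he
      exact ⟨a :: U, q :: W, (aErase_cons_self a U).trans hU, aErase_cons_congr q hW,
        .cons ⟨a, hr, hyq⟩ hUW⟩
  | @cons p x ps xs hpx h₁ ih₁ =>
    by_cases hx : x = a
    · subst hx
      rw [aErase_cons_self] at he
      obtain ⟨U, W, hU, hW, hUW⟩ := ih₁ h₂ he
      exact ⟨p :: U, x :: W, aErase_cons_congr p hU, (aErase_cons_self x W).trans hW,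
        .cons ⟨x, hpx, hs⟩ hUW⟩
    induction h₂ with
    | nil => simp [aErase, hx] at he
    | @cons y q ys qs hyq h₂ ih₂ =>
      by_cases hy : y = a
      · subst hy
        rw [aErase_cons_self] at he
        obtain ⟨U, W, hU, hW, hUW⟩ := ih₂ he
        exact ⟨y :: U, q :: W, (aErase_cons_self y U).trans hU, aErase_cons_congr q hW,
          .cons ⟨y, hr, hyq⟩ hUW⟩
      · rw [aErase_cons_of_ne hx, aErase_cons_of_ne hy, List.cons_eq_cons] at he
        obtain ⟨rfl, he⟩ := he
        obtain ⟨U, W, hU, hW, hUW⟩ := ih₁ h₂ he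
        exact ⟨p :: U, q :: W, aErase_cons_congr p hU, aErase_cons_congr q hW,
          .cons ⟨x, hpx, hyq⟩ hUW⟩

theorem LeExt.comp {r s : α → α → Prop} {a : α} (hr : r a a) (hs : s a a)
    {u v w : List α} (huv : LeExt r a u v) (hvw : LeExt s a v w) :
    LeExt (Relation.Comp r s) a u w := by
  obtain ⟨u', v₁, hu', hv₁, h₁⟩ := huv
  obtain ⟨v₂, w', hv₂, hw', h₂⟩ := hvw
  obtain ⟨U, W, hU, hW, hUW⟩ :=
    exists_forall₂_comp_of_aErase_eq hr hs h₁ h₂ (hv₁.trans hv₂.symm)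
  exact ⟨U, W, hU.trans hu', hW.trans hw', hUW⟩

theorem LeExt.mono {r s : α → α → Prop} (hrs : ∀ x y, r x y → s x y) {a : α}
    {u v : List α} (h : LeExt r a u v) : LeExt s a u v := by
  obtain ⟨u', v', hu', hv', h'⟩ := h
  exact ⟨u', v', hu', hv', h'.imp hrs⟩

end

theorem stmt_4_general {α : Type*} [PartialOrder α] [DecidableEq α] (a : α)
    (u v w : List α)
    (huv : LeExt (· ≤ ·) a u v) (hvw : LeExt (· ≤ ·) a v w) :
    LeExt (· ≤ ·) a u w :=
  (huv.comp le_rfl le_rfl hvw).mono fun _ _ ⟨_, hxy, hyz⟩ => hxy.trans hyz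

/-- The induced relation `≤ₐ` is transitive. -/
theorem stmt_4 {α : Type*} [PartialOrder α] [DecidableEq α] (a : α)
    (u v w : List α) (hu : a ∉ u) (hv : a ∉ v) (hw : a ∉ w)
    (huv : LeExt (· ≤ ·) a u v) (hvw : LeExt (· ≤ ·) a v w) :
    LeExt (· ≤ ·) a u w :=
  stmt_4_general a u v w huv hvw
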